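/- (Refined backward Lipschitz estimate depending on the number of shocks, proved inside Lemma B.4.) Let the model data satisfy the Lipschitz assumptions, let μ, μ̄ ∈ M, and let v, v̄ be the unique regular solutions of (E1) and (E3) given μ and μ̄ respectively. Then for every (t,u) ∈ TS, ‖v(t,u) − v̄(t,u)‖ ≤ (L_Ψ + K1·T) · exp(K2·T) · ( Σ_{i=0}^{n−Z(u)} ( exp(K2·T) · λmax · T )^i ) · sup_{(s,w)∈TS} ‖μ(s,w) − μ̄(s,w)‖. -/

import Mathlib

open MeasureTheory
open scoped BigOperators Classical

namespace MFGShocks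

/-- The probability simplex `𝒫(𝕊)` in `ℝ^S`. -/
def simplex (S : ℕ) : Set (Fin S → ℝ) :=
  {m | (∀ i, 0 ≤ m i) ∧ ∑ i, m i = 1}

/-- Membership in the parameter set `𝕌`: for some `k ≤ n`, the first `k` coordinates are
increasing and lie in `[0,T]` and the remaining coordinates equal `-1`. -/
def memU (n : ℕ) (T : ℝ) (u : Fin n → ℝ) : Prop :=
  ∃ k ≤ n, (∀ i : Fin n, (i : ℕ) < k → u i ∈ Set.Icc (0 : ℝ) T) ∧
    (∀ i j : Fin n, (j : ℕ) < k → i ≤ j → u i ≤ u j) ∧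
    (∀ i : Fin n, k ≤ (i : ℕ) → u i = -1)

/-- `Z(u)`: the number of coordinates of `u` different from `-1`, i.e.\ the number of
shocks recorded in `u`. -/
noncomputable def Zu {n : ℕ} (u : Fin n → ℝ) : ℕ :=
  (Finset.univ.filter fun i => u i ≠ -1).card

/-- Membership `(t,u) ∈ TS`. -/
def memTS (n : ℕ) (T : ℝ) (t : ℝ) (u : Fin n → ℝ) : Prop :=
  memU n T u ∧ t ∈ Set.Icc (0 : ℝ) T ∧ ∀ i, u i ≤ t

/-- `→(u,t)`: record a new shock at time `t` (replace coordinate `Z(u)+1` of `u` by `t`). -/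
noncomputable def push {n : ℕ} (u : Fin n → ℝ) (t : ℝ) : Fin n → ℝ :=
  fun i => if (i : ℕ) = Zu u then t else u i

/-- `←u`: delete the last shock (replace coordinate `Z(u)` of `u` by `-1`). -/
noncomputable def pop {n : ℕ} (u : Fin n → ℝ) : Fin n → ℝ :=
  fun i => if (i : ℕ) + 1 = Zu u then -1 else u i

/-- `t_u = u^{Z(u)}`: the time of the last shock recorded in `u` (`0` if there is none). -/
noncomputable def lastTime {n : ℕ} (u : Fin n → ℝ) : ℝ :=
  if h : Zu u - 1 < n then u ⟨Zu u - 1, h⟩ else 0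

/-- The left endpoint of the time interval associated with the parameter `u`:
`t_u` if `u` records at least one shock, and `0` otherwise. -/
noncomputable def startTime {n : ℕ} (u : Fin n → ℝ) : ℝ :=
  if Zu u = 0 then 0 else lastTime u

/-- `f` is absolutely continuous on the interval `[a,b]`. -/
def AbsContOn {E : Type*} [NormedAddCommGroup E] (f : ℝ → E) (a b : ℝ) : Prop :=
  ∀ ε > (0 : ℝ), ∃ δ > (0 : ℝ), ∀ (N : ℕ) (c d : Fin N → ℝ),
    (∀ k, a ≤ c k ∧ c k ≤ d k ∧ d k ≤ b) →
    (∀ k l, k ≠ l → Set.Ioo (c k) (d k) ∩ Set.Ioo (c l) (d l) = ∅) →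
    ∑ k, (d k - c k) < δ → ∑ k, ‖f (d k) - f (c k)‖ < ε

/-- A function `f : TS → ℝ^S` is regular if `f(·,u)` is absolutely continuous on
`[max_k u^k, T]` (intersected with `[0,T]`) for every `u ∈ 𝕌`. -/
def Regular (S n : ℕ) (T : ℝ) (f : ℝ → (Fin n → ℝ) → Fin S → ℝ) : Prop :=
  ∀ u : Fin n → ℝ, memU n T u → AbsContOn (fun t => f t u) (startTime u) T

/-- The model data: reduced-form running reward `ψ̂`, reduced-form intensity matrix `Q̂`,
shock intensities `λ`, terminal reward `Ψ`, relocation map `J` (independent of the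
distribution) and initial distribution `m₀`. -/
structure Model (S n : ℕ) where
  psi : ℝ → (Fin n → ℝ) → (Fin S → ℝ) → (Fin S → ℝ) → Fin S → ℝ
  Q : ℝ → (Fin n → ℝ) → (Fin S → ℝ) → (Fin S → ℝ) → Fin S → Fin S → ℝ
  lam : ℕ → ℝ → (Fin S → ℝ) → ℝ
  Psi : ℕ → (Fin S → ℝ) → Fin S → ℝ
  J : ℝ → Fin S → Fin S
  m0 : Fin S → ℝ

/-- The standing (boundedness, measurability, intensity-matrix and Lipschitz) assumptions on
the model data, together with the constants `Ψmax, ψmax, Qmax, λmax, Jmax` bounding the data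
and the Lipschitz constants `L_ψ̂, L_Q̂, L_Ψ, L_λ`.  Throughout, `ℝ^S` carries the maximum
norm and the matrix norm is the compatible induced one (maximal absolute row sum). -/
structure Hyps (S n : ℕ) (T : ℝ) (D : Model S n)
    (Lpsi LQ LPsi Llam Psimax psimax Qmax lammax : ℝ) (Jmax : ℕ) : Prop where
  hS : 1 ≤ S
  hn : 1 ≤ n
  hT : 0 < T
  hm0 : D.m0 ∈ simplex S
  hLpsi : 0 < Lpsi
  hLQ : 0 < LQ
  hLPsi : 0 < LPsi
  hLlam : 0 < Llam
  psi_meas : Measurable fun p : ℝ × (Fin n → ℝ) × (Fin S → ℝ) × (Fin S → ℝ) =>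
    D.psi p.1 p.2.1 p.2.2.1 p.2.2.2
  Q_meas : Measurable fun p : ℝ × (Fin n → ℝ) × (Fin S → ℝ) × (Fin S → ℝ) =>
    D.Q p.1 p.2.1 p.2.2.1 p.2.2.2
  lam_meas : ∀ k, Measurable fun p : ℝ × (Fin S → ℝ) => D.lam k p.1 p.2
  Psi_meas : ∀ k, Measurable (D.Psi k)
  J_meas : Measurable D.J
  psi_bdd : ∀ t u m v, memTS n T t u → m ∈ simplex S → ∀ i, |D.psi t u m v i| ≤ psimax
  Q_bdd : ∀ t u m v, memTS n T t u → m ∈ simplex S → ∀ i, ∑ j, |D.Q t u m v i j| ≤ Qmax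
  Q_offdiag : ∀ t u m v i j, i ≠ j → 0 ≤ D.Q t u m v i j
  Q_rowsum : ∀ t u m v i, ∑ j, D.Q t u m v i j = 0
  lam_pos : ∀ k, 1 ≤ k → k ≤ n → ∀ t ∈ Set.Icc (0 : ℝ) T, ∀ m ∈ simplex S,
    0 < D.lam k t m
  lam_bdd : ∀ k, 1 ≤ k → k ≤ n → ∀ t ∈ Set.Icc (0 : ℝ) T, ∀ m ∈ simplex S,
    D.lam k t m ≤ lammax
  Psi_bdd : ∀ k ≤ n, ∀ m ∈ simplex S, ∀ i, |D.Psi k m i| ≤ Psimax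
  psi_lip : ∀ t u, memTS n T t u → ∀ m₁ ∈ simplex S, ∀ m₂ ∈ simplex S,
    ∀ v₁ v₂ : Fin S → ℝ, ∀ i,
      |D.psi t u m₁ v₁ i - D.psi t u m₂ v₂ i| ≤ Lpsi * (‖m₁ - m₂‖ + ‖v₁ - v₂‖)
  Q_lip : ∀ t u, memTS n T t u → ∀ m₁ ∈ simplex S, ∀ m₂ ∈ simplex S,
    ∀ v₁ v₂ : Fin S → ℝ, ∀ i,
      ∑ j, |D.Q t u m₁ v₁ i j - D.Q t u m₂ v₂ i j| ≤ LQ * (‖m₁ - m₂‖ + ‖v₁ - v₂‖)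
  Psi_lip : ∀ k ≤ n, ∀ m₁ ∈ simplex S, ∀ m₂ ∈ simplex S,
    ‖D.Psi k m₁ - D.Psi k m₂‖ ≤ LPsi * ‖m₁ - m₂‖
  lam_lip : ∀ k, 1 ≤ k → k ≤ n → ∀ t ∈ Set.Icc (0 : ℝ) T, ∀ m₁ ∈ simplex S, ∀ m₂ ∈ simplex S,
    |D.lam k t m₁ - D.lam k t m₂| ≤ Llam * ‖m₁ - m₂‖
  J_bdd : ∀ t ∈ Set.Icc (0 : ℝ) T, ∀ j : Fin S,
    (Finset.univ.filter fun i => D.J t i = j).card ≤ Jmax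

/-- The constant `v_max`. -/
noncomputable def vmaxC (n : ℕ) (T Psimax psimax Qmax lammax : ℝ) : ℝ :=
  (Psimax + psimax * T) * Real.exp ((Qmax + lammax) * T) *
    ∑ i ∈ Finset.range (n + 1), (Real.exp ((Qmax + lammax) * T) * lammax * T) ^ i

/-- The constant `K₁ = L_ψ̂ + L_Q̂ v_max + 2 v_max L_λ`. -/
noncomputable def K1C (n : ℕ) (T Lpsi LQ Llam Psimax psimax Qmax lammax : ℝ) : ℝ :=
  Lpsi + LQ * vmaxC n T Psimax psimax Qmax lammax +
    2 * vmaxC n T Psimax psimax Qmax lammax * Llam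

/-- The constant `K₂ = L_ψ̂ + v_max L_Q̂ + Qmax + λmax`. -/
noncomputable def K2C (n : ℕ) (T Lpsi LQ Psimax psimax Qmax lammax : ℝ) : ℝ :=
  Lpsi + vmaxC n T Psimax psimax Qmax lammax * LQ + Qmax + lammax

/-- The right-hand side of the backward equation (E1), written for the integral
(Carathéodory) formulation `v(t,u) = Ψ(Z(u),μ(T,u)) + ∫_t^T (E1rhs)(s) ds`. -/
noncomputable def E1rhs {S n : ℕ} (D : Model S n)
    (μ v : ℝ → (Fin n → ℝ) → Fin S → ℝ) (u : Fin n → ℝ) (i : Fin S) (s : ℝ) : ℝ :=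
  D.psi s u (μ s u) (v s u) i + (∑ j, D.Q s u (μ s u) (v s u) i j * v s u j) +
    (if Zu u < n then
      D.lam (Zu u + 1) s (μ s u) * (v s (push u s) (D.J s i) - v s u i)
    else 0)

/-- `v` is a (Carathéodory) solution of the backward equation (E1) with terminal
condition (E3), given the flow `μ`. -/
def SolBackward (S n : ℕ) (T : ℝ) (D : Model S n)
    (μ v : ℝ → (Fin n → ℝ) → Fin S → ℝ) : Prop :=
  ∀ u : Fin n → ℝ, memU n T u →
    (∀ i : Fin S, v T u i = D.Psi (Zu u) (μ T u) i) ∧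
    ∀ t : ℝ, memTS n T t u → ∀ i : Fin S,
      IntervalIntegrable (E1rhs D μ v u i) volume t T ∧
      v t u i = D.Psi (Zu u) (μ T u) i + ∫ s in t..T, E1rhs D μ v u i s

/-- The right-hand side of the forward equation (E2). -/
noncomputable def E2rhs {S n : ℕ} (D : Model S n)
    (v μ : ℝ → (Fin n → ℝ) → Fin S → ℝ) (u : Fin n → ℝ) (i : Fin S) (s : ℝ) : ℝ :=
  ∑ j, μ s u j * D.Q s u (μ s u) (v s u) j i

/-- `μ` is a (Carathéodory) solution of the forward equation (E2) with initial
condition (E4) and consistency conditions (E5), given the value function `v`. -/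
def SolForward (S n : ℕ) (T : ℝ) (D : Model S n)
    (v μ : ℝ → (Fin n → ℝ) → Fin S → ℝ) : Prop :=
  (∀ i, μ 0 (fun _ => (-1 : ℝ)) i = D.m0 i) ∧
  (∀ u : Fin n → ℝ, memU n T u → 1 ≤ Zu u → ∀ j : Fin S,
    μ (lastTime u) u j =
      ∑ i, if D.J (lastTime u) i = j then μ (lastTime u) (pop u) i else 0) ∧
  (∀ u : Fin n → ℝ, memU n T u → ∀ t : ℝ, memTS n T t u → ∀ i : Fin S,
    IntervalIntegrable (E2rhs D v μ u i) volume (startTime u) t ∧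
    μ t u i = μ (startTime u) u i + ∫ s in (startTime u)..t, E2rhs D v μ u i s)

/-- Membership in `M`: a `𝒫(𝕊)`-valued function on `TS` that is `Qmax`-Lipschitz in time. -/
def MemM (S n : ℕ) (T Qmax : ℝ) (μ : ℝ → (Fin n → ℝ) → Fin S → ℝ) : Prop :=
  (∀ t u, memTS n T t u → μ t u ∈ simplex S) ∧
  ∀ u : Fin n → ℝ, memU n T u → ∀ t₁ t₂ : ℝ, memTS n T t₁ u → memTS n T t₂ u →
    ‖μ t₁ u - μ t₂ u‖ ≤ Qmax * |t₁ - t₂|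

/-- Membership in `V`: a regular function on `TS` bounded by `v_max` in supremum norm. -/
def MemV (S n : ℕ) (T vmaxVal : ℝ) (v : ℝ → (Fin n → ℝ) → Fin S → ℝ) : Prop :=
  Regular S n T v ∧ ∀ t u, memTS n T t u → ‖v t u‖ ≤ vmaxVal

/-- The supremum norm over `TS` of a function `f : TS → ℝ^S`. -/
noncomputable def supTS (S n : ℕ) (T : ℝ) (f : ℝ → (Fin n → ℝ) → Fin S → ℝ) : ℝ :=
  sSup {r : ℝ | ∃ t u, memTS n T t u ∧ r = ‖f t u‖}

end MFGShocks

/-!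
For fixed `u` the difference `w = v(·,u) - v̄(·,u)` solves a backward integral equation whose
integrand is bounded by `K₁ ε + λmax ‖w(·, →(u,·))‖ + K₂ ‖w‖`, where `ε = sup ‖μ - μ̄‖`; the
constants `K₁, K₂` involve `v_max`, which bounds `v` and `v̄` by the same argument applied to
`v` alone. Grönwall's inequality, run backwards from `T`, turns this into
`‖w(t,u)‖ ≤ A ε + r b` with `A = (L_Ψ + K₁ T) e^{K₂ T}`, `r = e^{K₂ T} λmax T`, and `b` a bound
for the difference one shock later. With `n` shocks recorded the jump term vanishes, so
induction on `n - Z(u)` produces the geometric sum.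
-/

open Set Finset Real

theorem le_mul_exp_of_le_add_integral {g : ℝ → ℝ} {t T M C : ℝ} (htT : t ≤ T) (hC : 0 ≤ C)
    (hg : ContinuousOn g (Icc t T))
    (hle : ∀ s ∈ Icc t T, g s ≤ M + C * ∫ σ in s..T, g σ) :
    g t ≤ M * exp (C * (T - t)) := by
  set R : ℝ → ℝ := fun s => M + C * ∫ σ in s..T, g σ with hRdef
  have hR : ContinuousOn R (Icc t T) := by
    have := intervalIntegral.continuousOn_primitive_interval_left
      (μ := MeasureTheory.volume) (hg.integrableOn_Icc.mono_set (uIcc_of_le htT).subset)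
    rw [uIcc_of_le htT] at this
    exact continuousOn_const.add (continuousOn_const.mul this)
  -- `e^{Cs} R(s)` is nondecreasing because `R' = -C g ≥ -C R`.
  have hmono : MonotoneOn (fun s => exp (C * s) * R s) (Icc t T) := by
    refine monotoneOn_of_hasDerivWithinAt_nonneg (convex_Icc t T)
      ((continuous_exp.comp (continuous_const.mul continuous_id)).continuousOn.mul hR)
      (f' := fun s => C * exp (C * s) * (R s - g s)) (fun s hs => ?_) (fun s hs => ?_)
    · rw [interior_Icc] at hs
      have hprim := intervalIntegral.integral_hasDerivAt_left
        ((hg.mono (Icc_subset_Icc hs.1.le le_rfl)).intervalIntegrable_of_Icc hs.2.le)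
        ((hg.mono Ioo_subset_Icc_self).stronglyMeasurableAtFilter isOpen_Ioo s hs)
        (hg.continuousAt (Icc_mem_nhds hs.1 hs.2))
      have hexp := ((hasDerivAt_id s).const_mul C).exp
      refine ((hexp.mul (hprim.const_mul C |>.const_add M)).hasDerivWithinAt).congr_deriv ?_
      simp only [hRdef, id]; ring
    · rw [interior_Icc] at hs
      have hgs := hle s (Ioo_subset_Icc_self hs)
      have hRg : 0 ≤ R s - g s := by simp only [hRdef]; linarith
      positivity
  have hend := hmono ⟨le_rfl, htT⟩ ⟨htT, le_rfl⟩ htT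
  simp only [hRdef, intervalIntegral.integral_same, mul_zero, add_zero] at hend
  calc g t ≤ R t := hle t ⟨le_rfl, htT⟩
    _ = exp (-(C * t)) * (exp (C * t) * R t) := by rw [← mul_assoc, ← exp_add]; simp
    _ ≤ exp (-(C * t)) * (exp (C * T) * M) := by gcongr
    _ = M * exp (C * (T - t)) := by rw [← mul_assoc, ← exp_add]; ring_nf

theorem continuousOn_of_eq_add_integral {w f : ℝ → ℝ} {t T a : ℝ} (htT : t ≤ T)
    (hf : IntervalIntegrable f volume t T) (heq : ∀ s ∈ Icc t T, w s = a + ∫ σ in s..T, f σ) :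
    ContinuousOn w (Icc t T) := by
  have := intervalIntegral.continuousOn_primitive_interval_left
    ((intervalIntegrable_iff_integrableOn_Icc_of_le htT).1 hf |>.mono_set (uIcc_of_le htT).subset)
  rw [uIcc_of_le htT] at this
  exact (continuousOn_const.add this).congr heq

theorem norm_le_of_eq_add_integral {ι : Type*} [Fintype ι] {w : ℝ → ι → ℝ} {f : ι → ℝ → ℝ}
    {t T P c C : ℝ} (htT : t ≤ T) (hc : 0 ≤ c) (hC : 0 ≤ C)
    (hf : ∀ i, IntervalIntegrable (f i) volume t T)
    (heq : ∀ i, ∀ s ∈ Icc t T, w s i = w T i + ∫ σ in s..T, f i σ)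
    (hwT : ‖w T‖ ≤ P) (hfle : ∀ i, ∀ σ ∈ Icc t T, |f i σ| ≤ c + C * ‖w σ‖) :
    ‖w t‖ ≤ (P + c * (T - t)) * exp (C * (T - t)) := by
  have hw : ContinuousOn (fun s => ‖w s‖) (Icc t T) :=
    (continuousOn_pi.2 fun i => continuousOn_of_eq_add_integral htT (hf i) (heq i)).norm
  refine le_mul_exp_of_le_add_integral htT hC hw fun s hs => ?_
  have hsub : Icc s T ⊆ Icc t T := Icc_subset_Icc hs.1 le_rfl
  have hwint : IntervalIntegrable (fun σ => ‖w σ‖) volume s T :=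
    (hw.mono hsub).intervalIntegrable_of_Icc hs.2
  have hint_nonneg : 0 ≤ ∫ σ in s..T, ‖w σ‖ :=
    intervalIntegral.integral_nonneg hs.2 fun σ _ => norm_nonneg _
  have hP : 0 ≤ P := (norm_nonneg _).trans hwT
  refine (pi_norm_le_iff_of_nonneg (by nlinarith [hs.2])).2 fun i => ?_
  have hfint : |∫ σ in s..T, f i σ| ≤ c * (T - s) + C * ∫ σ in s..T, ‖w σ‖ := by
    calc |∫ σ in s..T, f i σ| ≤ ∫ σ in s..T, (c + C * ‖w σ‖) := by
          rw [← Real.norm_eq_abs]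
          exact intervalIntegral.norm_integral_le_of_norm_le hs.2
              (Filter.Eventually.of_forall fun σ hσ => hfle i σ (hsub (Ioc_subset_Icc_self hσ)))
              (intervalIntegrable_const.add (hwint.const_mul C))
      _ = c * (T - s) + C * ∫ σ in s..T, ‖w σ‖ := by
          rw [intervalIntegral.integral_add intervalIntegrable_const (hwint.const_mul C),
            intervalIntegral.integral_const, intervalIntegral.integral_const_mul, smul_eq_mul,
            mul_comm]
  calc ‖w s i‖ = |w T i + ∫ σ in s..T, f i σ| := by rw [heq i s hs, Real.norm_eq_abs]
    _ ≤ ‖w T‖ + (c * (T - s) + C * ∫ σ in s..T, ‖w σ‖) :=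
        (abs_add_le _ _).trans (add_le_add ((Real.norm_eq_abs _).symm ▸ norm_le_pi_norm _ i) hfint)
    _ ≤ P + c * (T - t) + C * ∫ σ in s..T, ‖w σ‖ := by nlinarith [hs.1]


theorem abs_apply_le_norm {ι : Type*} [Fintype ι] (x : ι → ℝ) (i : ι) : |x i| ≤ ‖x‖ := by
  simpa only [Real.norm_eq_abs] using norm_le_pi_norm x i

theorem abs_sum_mul_le {ι : Type*} [Fintype ι] (a x : ι → ℝ) :
    |∑ j, a j * x j| ≤ (∑ j, |a j|) * ‖x‖ := by
  rw [sum_mul]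
  refine (abs_sum_le_sum_abs _ _).trans (sum_le_sum fun j _ => ?_)
  rw [abs_mul]
  exact mul_le_mul_of_nonneg_left (abs_apply_le_norm x j) (abs_nonneg _)

theorem abs_mul_sub_mul_le (a b x y : ℝ) : |a * x - b * y| ≤ |a - b| * |x| + |b| * |x - y| := by
  rw [← abs_mul, ← abs_mul]
  exact (abs_add_le _ _).trans_eq' (by ring_nf)

theorem abs_sum_mul_sub_sum_mul_le {ι : Type*} [Fintype ι] (a b x y : ι → ℝ) :
    |∑ j, a j * x j - ∑ j, b j * y j| ≤ (∑ j, |a j - b j|) * ‖x‖ + (∑ j, |b j|) * ‖x - y‖ := by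
  have hsplit : ∑ j, a j * x j - ∑ j, b j * y j
      = ∑ j, (a j - b j) * x j + ∑ j, b j * (x - y) j := by
    simp only [Pi.sub_apply, ← sum_sub_distrib, ← sum_add_distrib]
    exact sum_congr rfl fun j _ => by ring
  rw [hsplit]
  exact (abs_add_le _ _).trans (add_le_add (abs_sum_mul_le _ _) (abs_sum_mul_le _ _))

namespace MFGShocks

section Shocks

variable {n : ℕ} {T : ℝ}

theorem Zu_eq_of_memU_witness {u : Fin n → ℝ} {k : ℕ} (hk : k ≤ n)
    (hpos : ∀ i : Fin n, (i : ℕ) < k → u i ∈ Icc (0 : ℝ) T)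
    (hneg : ∀ i : Fin n, k ≤ (i : ℕ) → u i = -1) : Zu u = k := by
  have hfilter : (univ.filter fun i : Fin n => u i ≠ -1)
      = univ.filter fun i : Fin n => (i : ℕ) < k := by
    ext i
    simp only [Finset.mem_filter, Finset.mem_univ, true_and]
    constructor
    · exact fun h => not_le.1 fun hki => h (hneg i hki)
    · intro hik hi
      linarith [(hpos i hik).1]
  rw [Zu, hfilter, Fin.card_filter_val_lt, min_eq_right hk]

theorem Zu_le_of_memU {u : Fin n → ℝ} (hu : memU n T u) : Zu u ≤ n := by
  obtain ⟨k, hk, hpos, -, hneg⟩ := hu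
  exact (Zu_eq_of_memU_witness hk hpos hneg).trans_le hk

theorem memTS.of_le {t s : ℝ} {u : Fin n → ℝ} (h : memTS n T t u) (hts : t ≤ s) (hsT : s ≤ T) :
    memTS n T s u :=
  ⟨h.1, ⟨h.2.1.1.trans hts, hsT⟩, fun i => (h.2.2 i).trans hts⟩

theorem memTS_push {s : ℝ} {u : Fin n → ℝ} (h : memTS n T s u) (hZ : Zu u < n) :
    memTS n T s (push u s) ∧ Zu (push u s) = Zu u + 1 := by
  obtain ⟨⟨k, hk, hpos, hmono, hneg⟩, hs, hus⟩ := h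
  obtain rfl : Zu u = k := Zu_eq_of_memU_witness hk hpos hneg
  have hpos' : ∀ i : Fin n, (i : ℕ) < Zu u + 1 → push u s i ∈ Icc (0 : ℝ) T := by
    intro i hi
    unfold MFGShocks.push
    split_ifs with h
    · exact hs
    · exact hpos i (by omega)
  have hneg' : ∀ i : Fin n, Zu u + 1 ≤ (i : ℕ) → push u s i = -1 := by
    intro i hi
    rw [MFGShocks.push, if_neg (by omega)]
    exact hneg i (by omega)
  refine ⟨⟨⟨Zu u + 1, hZ, hpos', fun i j hj hij => ?_, hneg'⟩, hs, fun i => ?_⟩,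
    Zu_eq_of_memU_witness hZ hpos' hneg'⟩
  · have := Fin.le_def.1 hij
    unfold MFGShocks.push
    split_ifs with hi hj' hj'
    · exact le_rfl
    · omega
    · exact hus i
    · exact hmono i j (by omega) hij
  · unfold MFGShocks.push
    split_ifs
    exacts [le_rfl, hus i]

end Shocks

theorem le_mul_geom_sum_of_le_add_mul_push {n : ℕ} {T : ℝ} {F : ℝ → (Fin n → ℝ) → ℝ} {A r : ℝ}
    (hA : 0 ≤ A) (hr : 0 ≤ r)
    (hstep : ∀ b, 0 ≤ b → ∀ t u, memTS n T t u →
      (Zu u < n → ∀ σ ∈ Icc t T, F σ (push u σ) ≤ b) → F t u ≤ A + r * b)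
    {t : ℝ} {u : Fin n → ℝ} (htu : memTS n T t u) :
    F t u ≤ A * ∑ i ∈ range (n - Zu u + 1), r ^ i := by
  induction hk : n - Zu u generalizing t u with
  | zero =>
    simpa using hstep 0 le_rfl t u htu fun hZ => by omega
  | succ k ih =>
    have hZ : Zu u < n := by omega
    have hb : 0 ≤ A * ∑ i ∈ range (k + 1), r ^ i := by positivity
    refine (hstep _ hb t u htu fun _ σ hσ => ?_).trans_eq ?_
    · obtain ⟨hmem, hZpush⟩ := memTS_push (htu.of_le hσ.1 hσ.2) hZ
      exact ih hmem (by omega)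
    · rw [geom_sum_succ (n := k + 1)]; ring

theorem norm_le_one_of_mem_simplex {S : ℕ} {m : Fin S → ℝ} (hm : m ∈ simplex S) : ‖m‖ ≤ 1 :=
  (pi_norm_le_iff_of_nonneg zero_le_one).2 fun i => by
    rw [Real.norm_eq_abs, abs_of_nonneg (hm.1 i), ← hm.2]
    exact single_le_sum (fun j _ => hm.1 j) (Finset.mem_univ i)

theorem memTS_zero_neg_one {n : ℕ} {T : ℝ} (hT : 0 ≤ T) : memTS n T 0 (fun _ => -1) :=
  ⟨⟨0, n.zero_le, fun _ h => absurd h (Nat.not_lt_zero _),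
    fun _ _ h => absurd h (Nat.not_lt_zero _), fun _ _ => rfl⟩, ⟨le_rfl, hT⟩, fun _ => by norm_num⟩

section supTS

variable {S n : ℕ} {T : ℝ}

theorem supTS_nonneg (f : ℝ → (Fin n → ℝ) → Fin S → ℝ) : 0 ≤ supTS S n T f :=
  Real.sSup_nonneg <| by
    rintro r ⟨t, u, -, rfl⟩
    exact norm_nonneg _

theorem norm_le_supTS {f : ℝ → (Fin n → ℝ) → Fin S → ℝ} {B : ℝ}
    (hB : ∀ t u, memTS n T t u → ‖f t u‖ ≤ B) {t : ℝ} {u : Fin n → ℝ} (htu : memTS n T t u) :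
    ‖f t u‖ ≤ supTS S n T f :=
  le_csSup ⟨B, by rintro r ⟨s, w, hsw, rfl⟩; exact hB s w hsw⟩ ⟨t, u, htu, rfl⟩

theorem MemM.norm_sub_le_supTS {Qmax : ℝ} {μ μ' : ℝ → (Fin n → ℝ) → Fin S → ℝ}
    (hμ : MemM S n T Qmax μ) (hμ' : MemM S n T Qmax μ') {t : ℝ} {u : Fin n → ℝ}
    (htu : memTS n T t u) :
    ‖μ t u - μ' t u‖ ≤ supTS S n T (fun t u => μ t u - μ' t u) :=
  norm_le_supTS (B := 1 + 1) (fun s w hsw => (norm_sub_le _ _).trans <| add_le_add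
    (norm_le_one_of_mem_simplex (hμ.1 s w hsw)) (norm_le_one_of_mem_simplex (hμ'.1 s w hsw))) htu

end supTS

namespace Hyps

variable {S n : ℕ} {T : ℝ} {D : Model S n}
  {Lpsi LQ LPsi Llam Psimax psimax Qmax lammax : ℝ} {Jmax : ℕ}

theorem Psimax_nonneg (H : Hyps S n T D Lpsi LQ LPsi Llam Psimax psimax Qmax lammax Jmax) :
    0 ≤ Psimax :=
  (abs_nonneg _).trans (H.Psi_bdd 0 n.zero_le D.m0 H.hm0 ⟨0, H.hS⟩)

theorem psimax_nonneg (H : Hyps S n T D Lpsi LQ LPsi Llam Psimax psimax Qmax lammax Jmax) :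
    0 ≤ psimax :=
  (abs_nonneg _).trans (H.psi_bdd 0 _ D.m0 0 (memTS_zero_neg_one H.hT.le) H.hm0 ⟨0, H.hS⟩)

theorem Qmax_nonneg (H : Hyps S n T D Lpsi LQ LPsi Llam Psimax psimax Qmax lammax Jmax) :
    0 ≤ Qmax :=
  (sum_nonneg fun _ _ => abs_nonneg _).trans
    (H.Q_bdd 0 _ D.m0 0 (memTS_zero_neg_one H.hT.le) H.hm0 ⟨0, H.hS⟩)

theorem abs_lam_le (H : Hyps S n T D Lpsi LQ LPsi Llam Psimax psimax Qmax lammax Jmax) {k : ℕ}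
    (hk1 : 1 ≤ k) (hkn : k ≤ n) {t : ℝ} (ht : t ∈ Icc 0 T) {m : Fin S → ℝ}
    (hm : m ∈ simplex S) : |D.lam k t m| ≤ lammax := by
  rw [abs_of_pos (H.lam_pos k hk1 hkn t ht m hm)]
  exact H.lam_bdd k hk1 hkn t ht m hm

theorem lammax_nonneg (H : Hyps S n T D Lpsi LQ LPsi Llam Psimax psimax Qmax lammax Jmax) :
    0 ≤ lammax :=
  (abs_nonneg _).trans (H.abs_lam_le le_rfl H.hn ⟨le_rfl, H.hT.le⟩ H.hm0)

theorem vmax_nonneg (H : Hyps S n T D Lpsi LQ LPsi Llam Psimax psimax Qmax lammax Jmax) :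
    0 ≤ vmaxC n T Psimax psimax Qmax lammax := by
  have := H.Psimax_nonneg; have := H.psimax_nonneg; have := H.lammax_nonneg; have := H.hT.le
  unfold vmaxC; positivity

theorem K1_nonneg (H : Hyps S n T D Lpsi LQ LPsi Llam Psimax psimax Qmax lammax Jmax) :
    0 ≤ K1C n T Lpsi LQ Llam Psimax psimax Qmax lammax := by
  have := H.vmax_nonneg; have := H.hLpsi.le; have := H.hLQ.le; have := H.hLlam.le
  unfold K1C; positivity

theorem K2_nonneg (H : Hyps S n T D Lpsi LQ LPsi Llam Psimax psimax Qmax lammax Jmax) :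
    0 ≤ K2C n T Lpsi LQ Psimax psimax Qmax lammax := by
  have := H.vmax_nonneg; have := H.hLpsi.le; have := H.hLQ.le; have := H.Qmax_nonneg
  have := H.lammax_nonneg
  unfold K2C; positivity

end Hyps

section E1rhs

variable {S n : ℕ} {T : ℝ} {D : Model S n}
  {Lpsi LQ LPsi Llam Psimax psimax Qmax lammax : ℝ} {Jmax : ℕ}
  {μ μ' v v' : ℝ → (Fin n → ℝ) → Fin S → ℝ} {σ : ℝ} {u : Fin n → ℝ}

theorem abs_E1rhs_le (H : Hyps S n T D Lpsi LQ LPsi Llam Psimax psimax Qmax lammax Jmax)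
    (hσ : memTS n T σ u) (hμ : μ σ u ∈ simplex S) {b : ℝ} (hb : 0 ≤ b)
    (hpush : Zu u < n → ‖v σ (push u σ)‖ ≤ b) (i : Fin S) :
    |E1rhs D μ v u i σ| ≤ psimax + lammax * b + (Qmax + lammax) * ‖v σ u‖ := by
  have hψ := H.psi_bdd σ u _ (v σ u) hσ hμ i
  have hQ : |∑ j, D.Q σ u (μ σ u) (v σ u) i j * v σ u j| ≤ Qmax * ‖v σ u‖ :=
    (abs_sum_mul_le _ _).trans
      (mul_le_mul_of_nonneg_right (H.Q_bdd σ u _ _ hσ hμ i) (norm_nonneg _))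
  have hjump : |if Zu u < n then
      D.lam (Zu u + 1) σ (μ σ u) * (v σ (push u σ) (D.J σ i) - v σ u i) else 0|
      ≤ lammax * (b + ‖v σ u‖) := by
    split_ifs with hZ
    · rw [abs_mul]
      exact mul_le_mul (H.abs_lam_le le_add_self hZ hσ.2.1 hμ)
        ((abs_sub _ _).trans (add_le_add ((abs_apply_le_norm _ _).trans (hpush hZ))
          (abs_apply_le_norm _ _)))
        (abs_nonneg _) H.lammax_nonneg
    · rw [abs_zero]
      exact mul_nonneg H.lammax_nonneg (add_nonneg hb (norm_nonneg _))
  exact (abs_add_three _ _ _).trans (by linarith)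

theorem abs_E1rhs_sub_le (H : Hyps S n T D Lpsi LQ LPsi Llam Psimax psimax Qmax lammax Jmax)
    (hσ : memTS n T σ u) (hμ : μ σ u ∈ simplex S) (hμ' : μ' σ u ∈ simplex S) {ε b : ℝ}
    (hε : ‖μ σ u - μ' σ u‖ ≤ ε) (hb : 0 ≤ b)
    (hv : ‖v σ u‖ ≤ vmaxC n T Psimax psimax Qmax lammax)
    (hvpush : Zu u < n → ‖v σ (push u σ)‖ ≤ vmaxC n T Psimax psimax Qmax lammax)
    (hpush : Zu u < n → ‖v σ (push u σ) - v' σ (push u σ)‖ ≤ b) (i : Fin S) :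
    |E1rhs D μ v u i σ - E1rhs D μ' v' u i σ|
      ≤ K1C n T Lpsi LQ Llam Psimax psimax Qmax lammax * ε + lammax * b +
        K2C n T Lpsi LQ Psimax psimax Qmax lammax * ‖v σ u - v' σ u‖ := by
  set V := vmaxC n T Psimax psimax Qmax lammax
  set g := ‖v σ u - v' σ u‖
  have hε0 : 0 ≤ ε := (norm_nonneg _).trans hε
  have hψ : |D.psi σ u (μ σ u) (v σ u) i - D.psi σ u (μ' σ u) (v' σ u) i| ≤ Lpsi * (ε + g) :=
    (H.psi_lip σ u hσ _ hμ _ hμ' _ _ i).trans (by gcongr; exact H.hLpsi.le)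
  have hQ : |∑ j, D.Q σ u (μ σ u) (v σ u) i j * v σ u j
      - ∑ j, D.Q σ u (μ' σ u) (v' σ u) i j * v' σ u j| ≤ LQ * (ε + g) * V + Qmax * g := by
    refine (abs_sum_mul_sub_sum_mul_le _ _ _ _).trans (add_le_add ?_ ?_)
    · exact mul_le_mul ((H.Q_lip σ u hσ _ hμ _ hμ' _ _ i).trans (by gcongr; exact H.hLQ.le))
        hv (norm_nonneg _) (mul_nonneg H.hLQ.le (add_nonneg hε0 (norm_nonneg _)))
    · exact mul_le_mul_of_nonneg_right (H.Q_bdd σ u _ _ hσ hμ' i) (norm_nonneg _)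
  have hjump : |(if Zu u < n then
        D.lam (Zu u + 1) σ (μ σ u) * (v σ (push u σ) (D.J σ i) - v σ u i) else 0)
      - (if Zu u < n then
        D.lam (Zu u + 1) σ (μ' σ u) * (v' σ (push u σ) (D.J σ i) - v' σ u i) else 0)|
      ≤ Llam * ε * (2 * V) + lammax * (b + g) := by
    split_ifs with hZ
    · have hlam := H.lam_lip _ le_add_self hZ σ hσ.2.1 _ hμ _ hμ'
      have hjumpv : |v σ (push u σ) (D.J σ i) - v σ u i| ≤ 2 * V := by
        linarith [abs_sub (v σ (push u σ) (D.J σ i)) (v σ u i),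
          (abs_apply_le_norm _ (D.J σ i)).trans (hvpush hZ), (abs_apply_le_norm (v σ u) i).trans hv]
      have hjumpdiff : |v σ (push u σ) (D.J σ i) - v σ u i
          - (v' σ (push u σ) (D.J σ i) - v' σ u i)| ≤ b + g := by
        rw [sub_sub_sub_comm]
        exact (abs_sub _ _).trans (add_le_add
          ((abs_apply_le_norm (v σ (push u σ) - v' σ (push u σ)) (D.J σ i)).trans (hpush hZ))
          (abs_apply_le_norm (v σ u - v' σ u) i))
      refine (abs_mul_sub_mul_le _ _ _ _).trans (add_le_add ?_ ?_)
      · exact mul_le_mul (hlam.trans (by gcongr; exact H.hLlam.le)) hjumpv (abs_nonneg _)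
          (mul_nonneg H.hLlam.le hε0)
      · exact mul_le_mul (H.abs_lam_le le_add_self hZ hσ.2.1 hμ') hjumpdiff (abs_nonneg _)
          H.lammax_nonneg
    · have := H.vmax_nonneg; have := H.hLlam.le; have := H.lammax_nonneg
      rw [sub_zero, abs_zero]
      positivity
  have hsplit : E1rhs D μ v u i σ - E1rhs D μ' v' u i σ
      = (D.psi σ u (μ σ u) (v σ u) i - D.psi σ u (μ' σ u) (v' σ u) i)
        + (∑ j, D.Q σ u (μ σ u) (v σ u) i j * v σ u j
          - ∑ j, D.Q σ u (μ' σ u) (v' σ u) i j * v' σ u j)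
        + ((if Zu u < n then
            D.lam (Zu u + 1) σ (μ σ u) * (v σ (push u σ) (D.J σ i) - v σ u i) else 0)
          - (if Zu u < n then
            D.lam (Zu u + 1) σ (μ' σ u) * (v' σ (push u σ) (D.J σ i) - v' σ u i) else 0)) := by
    unfold E1rhs; ring
  rw [hsplit, K1C, K2C]
  exact (abs_add_three _ _ _).trans (by linarith)

end E1rhs

namespace SolBackward

variable {S n : ℕ} {T : ℝ} {D : Model S n}
  {Lpsi LQ LPsi Llam Psimax psimax Qmax lammax : ℝ} {Jmax : ℕ}
  {μ μ' v v' : ℝ → (Fin n → ℝ) → Fin S → ℝ} {t : ℝ} {u : Fin n → ℝ}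

theorem terminal (hv : SolBackward S n T D μ v) (hu : memU n T u) :
    v T u = D.Psi (Zu u) (μ T u) :=
  funext (hv u hu).1

theorem intervalIntegrable (hv : SolBackward S n T D μ v) (htu : memTS n T t u) (i : Fin S) :
    IntervalIntegrable (E1rhs D μ v u i) volume t T :=
  ((hv u htu.1).2 t htu i).1

theorem eq_add_integral (hv : SolBackward S n T D μ v) (htu : memTS n T t u) (i : Fin S)
    {s : ℝ} (hs : s ∈ Icc t T) : v s u i = v T u i + ∫ σ in s..T, E1rhs D μ v u i σ := by
  rw [((hv u htu.1).2 s (htu.of_le hs.1 hs.2) i).2, (hv u htu.1).1 i]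

theorem norm_le_of_norm_push_le
    (H : Hyps S n T D Lpsi LQ LPsi Llam Psimax psimax Qmax lammax Jmax)
    (hμ : ∀ t u, memTS n T t u → μ t u ∈ simplex S) (hv : SolBackward S n T D μ v)
    {b : ℝ} (hb : 0 ≤ b) (htu : memTS n T t u)
    (hpush : Zu u < n → ∀ σ ∈ Icc t T, ‖v σ (push u σ)‖ ≤ b) :
    ‖v t u‖ ≤ (Psimax + psimax * T) * exp ((Qmax + lammax) * T) +
      exp ((Qmax + lammax) * T) * lammax * T * b := by
  have hTu : memTS n T T u := htu.of_le htu.2.1.2 le_rfl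
  have hterm : ‖v T u‖ ≤ Psimax := by
    rw [hv.terminal htu.1]
    exact (pi_norm_le_iff_of_nonneg H.Psimax_nonneg).2 fun i =>
      H.Psi_bdd _ (Zu_le_of_memU htu.1) _ (hμ T u hTu) i
  have hc : 0 ≤ psimax + lammax * b := add_nonneg H.psimax_nonneg (mul_nonneg H.lammax_nonneg hb)
  have hest := norm_le_of_eq_add_integral (w := fun s => v s u) htu.2.1.2 hc
    (add_nonneg H.Qmax_nonneg H.lammax_nonneg) (hv.intervalIntegrable htu)
    (fun i s hs => hv.eq_add_integral htu i hs) hterm fun i σ hσ =>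
      abs_E1rhs_le H (htu.of_le hσ.1 hσ.2) (hμ σ u (htu.of_le hσ.1 hσ.2)) hb
        (fun hZ => hpush hZ σ hσ) i
  have hP := H.Psimax_nonneg
  have hT := H.hT.le
  have ht := htu.2.1.1
  calc ‖v t u‖
      ≤ (Psimax + (psimax + lammax * b) * (T - t)) * exp ((Qmax + lammax) * (T - t)) := hest
    _ ≤ (Psimax + (psimax + lammax * b) * T) * exp ((Qmax + lammax) * T) := by
        have := H.Qmax_nonneg; have := H.lammax_nonneg
        gcongr <;> nlinarith
    _ = _ := by ring

theorem norm_le_vmax (H : Hyps S n T D Lpsi LQ LPsi Llam Psimax psimax Qmax lammax Jmax)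
    (hμ : ∀ t u, memTS n T t u → μ t u ∈ simplex S) (hv : SolBackward S n T D μ v)
    (htu : memTS n T t u) : ‖v t u‖ ≤ vmaxC n T Psimax psimax Qmax lammax := by
  have := H.Psimax_nonneg; have := H.psimax_nonneg; have := H.lammax_nonneg; have := H.hT.le
  refine (le_mul_geom_sum_of_le_add_mul_push (by positivity) (by positivity)
    (fun b hb s w hsw hpush => hv.norm_le_of_norm_push_le H hμ hb hsw hpush) htu).trans ?_
  exact mul_le_mul_of_nonneg_left (sum_le_sum_of_subset_of_nonneg
    (range_subset_range.2 (by omega)) fun i _ _ => by positivity) (by positivity)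

theorem norm_sub_le_of_norm_sub_push_le
    (H : Hyps S n T D Lpsi LQ LPsi Llam Psimax psimax Qmax lammax Jmax)
    (hμ : ∀ t u, memTS n T t u → μ t u ∈ simplex S)
    (hμ' : ∀ t u, memTS n T t u → μ' t u ∈ simplex S)
    (hv : SolBackward S n T D μ v) (hv' : SolBackward S n T D μ' v') {ε : ℝ}
    (hε : ∀ s w, memTS n T s w → ‖μ s w - μ' s w‖ ≤ ε) {b : ℝ} (hb : 0 ≤ b)
    (htu : memTS n T t u)
    (hpush : Zu u < n → ∀ σ ∈ Icc t T, ‖v σ (push u σ) - v' σ (push u σ)‖ ≤ b) :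
    ‖v t u - v' t u‖ ≤
      (LPsi + K1C n T Lpsi LQ Llam Psimax psimax Qmax lammax * T) *
        exp (K2C n T Lpsi LQ Psimax psimax Qmax lammax * T) * ε +
      exp (K2C n T Lpsi LQ Psimax psimax Qmax lammax * T) * lammax * T * b := by
  have hTu : memTS n T T u := htu.of_le htu.2.1.2 le_rfl
  have hε0 : 0 ≤ ε := (norm_nonneg _).trans (hε t u htu)
  have hterm : ‖v T u - v' T u‖ ≤ LPsi * ε := by
    rw [hv.terminal htu.1, hv'.terminal htu.1]
    exact (H.Psi_lip _ (Zu_le_of_memU htu.1) _ (hμ T u hTu) _ (hμ' T u hTu)).trans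
      (mul_le_mul_of_nonneg_left (hε T u hTu) H.hLPsi.le)
  have hc : 0 ≤ K1C n T Lpsi LQ Llam Psimax psimax Qmax lammax * ε + lammax * b :=
    add_nonneg (mul_nonneg H.K1_nonneg hε0) (mul_nonneg H.lammax_nonneg hb)
  have hest := norm_le_of_eq_add_integral (w := fun s => v s u - v' s u)
    (f := fun i σ => E1rhs D μ v u i σ - E1rhs D μ' v' u i σ) htu.2.1.2 hc H.K2_nonneg
    (fun i => (hv.intervalIntegrable htu i).sub (hv'.intervalIntegrable htu i))
    (fun i s hs => by
      simp only [Pi.sub_apply]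
      have hsu := htu.of_le hs.1 hs.2
      rw [intervalIntegral.integral_sub (hv.intervalIntegrable hsu i)
        (hv'.intervalIntegrable hsu i), hv.eq_add_integral htu i hs,
        hv'.eq_add_integral htu i hs]
      ring)
    hterm fun i σ hσ => by
      have hσu := htu.of_le hσ.1 hσ.2
      exact abs_E1rhs_sub_le H hσu (hμ σ u hσu) (hμ' σ u hσu) (hε σ u hσu) hb
        (hv.norm_le_vmax H hμ hσu)
        (fun hZ => hv.norm_le_vmax H hμ (memTS_push hσu hZ).1) (fun hZ => hpush hZ σ hσ) i
  set K1 := K1C n T Lpsi LQ Llam Psimax psimax Qmax lammax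
  set K2 := K2C n T Lpsi LQ Psimax psimax Qmax lammax
  have hT := H.hT.le
  have ht := htu.2.1.1
  calc ‖v t u - v' t u‖
      ≤ (LPsi * ε + (K1 * ε + lammax * b) * (T - t)) * exp (K2 * (T - t)) := hest
    _ ≤ (LPsi * ε + (K1 * ε + lammax * b) * T) * exp (K2 * T) := by
        have := mul_nonneg H.hLPsi.le hε0; have := H.K2_nonneg
        gcongr <;> nlinarith
    _ = _ := by ring

end SolBackward

theorem backward_lipschitz_refined_general (S n : ℕ) (T : ℝ) (D : Model S n)
    (Lpsi LQ LPsi Llam Psimax psimax Qmax lammax : ℝ) (Jmax : ℕ)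
    (H : Hyps S n T D Lpsi LQ LPsi Llam Psimax psimax Qmax lammax Jmax)
    (μ μ' : ℝ → (Fin n → ℝ) → Fin S → ℝ)
    (hμ : MemM S n T Qmax μ) (hμ' : MemM S n T Qmax μ')
    (v v' : ℝ → (Fin n → ℝ) → Fin S → ℝ)
    (hv : SolBackward S n T D μ v)
    (hv' : SolBackward S n T D μ' v') :
    ∀ t u, memTS n T t u →
      ‖v t u - v' t u‖ ≤
        (LPsi + K1C n T Lpsi LQ Llam Psimax psimax Qmax lammax * T) *
          Real.exp (K2C n T Lpsi LQ Psimax psimax Qmax lammax * T) *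
          (∑ i ∈ Finset.range (n - Zu u + 1),
            (Real.exp (K2C n T Lpsi LQ Psimax psimax Qmax lammax * T) * lammax * T) ^ i) *
          supTS S n T (fun t u => μ t u - μ' t u) := by
  intro t u htu
  have hK1 := H.K1_nonneg
  have hlam := H.lammax_nonneg
  have hLPsi := H.hLPsi.le
  have hT := H.hT.le
  have hε := supTS_nonneg (S := S) (T := T) (fun t u => μ t u - μ' t u)
  refine (le_mul_geom_sum_of_le_add_mul_push (by positivity) (by positivity)
    (fun b hb s w hsw hpush => hv.norm_sub_le_of_norm_sub_push_le H hμ.1 hμ'.1 hv'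
      (fun _ _ => hμ.norm_sub_le_supTS hμ') hb hsw hpush) htu).trans_eq ?_
  ring

/-- **Refined backward Lipschitz estimate depending on the number of shocks**
(inside Lemma B.4). If `μ, μ̄ ∈ M` and `v, v̄` are the unique regular solutions of (E1),
(E3) given `μ` and `μ̄` respectively, then for every `(t,u) ∈ TS`,
`‖v(t,u) − v̄(t,u)‖ ≤ (L_Ψ + K₁T) e^{K₂T} (Σ_{i=0}^{n−Z(u)} (e^{K₂T} λmax T)^i)
  sup_{TS} ‖μ − μ̄‖`. -/
theorem backward_lipschitz_refined (S n : ℕ) (T : ℝ) (D : Model S n)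
    (Lpsi LQ LPsi Llam Psimax psimax Qmax lammax : ℝ) (Jmax : ℕ)
    (H : Hyps S n T D Lpsi LQ LPsi Llam Psimax psimax Qmax lammax Jmax)
    (μ μ' : ℝ → (Fin n → ℝ) → Fin S → ℝ)
    (hμ : MemM S n T Qmax μ) (hμ' : MemM S n T Qmax μ')
    (v v' : ℝ → (Fin n → ℝ) → Fin S → ℝ)
    (hvreg : Regular S n T v) (hv : SolBackward S n T D μ v)
    (hv'reg : Regular S n T v') (hv' : SolBackward S n T D μ' v') :
    ∀ t u, memTS n T t u →
      ‖v t u - v' t u‖ ≤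
        (LPsi + K1C n T Lpsi LQ Llam Psimax psimax Qmax lammax * T) *
          Real.exp (K2C n T Lpsi LQ Psimax psimax Qmax lammax * T) *
          (∑ i ∈ Finset.range (n - Zu u + 1),
            (Real.exp (K2C n T Lpsi LQ Psimax psimax Qmax lammax * T) * lammax * T) ^ i) *
          supTS S n T (fun t u => μ t u - μ' t u) :=
  backward_lipschitz_refined_general S n T D Lpsi LQ LPsi Llam Psimax psimax Qmax lammax Jmax H μ μ'
    hμ hμ' v v' hv hv'

end MFGShocks
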